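/- For a lazy finite Markov kernel P (i.e., P(x,x) ≥ 1/2 for all x) with stationary distribution π and any subset A of the state space, Q(A,Aᶜ) = ∫₀^{1/2} (π(A_u) − π(A)) du = ∫_{1/2}^1 (π(A) − π(A_u)) du. -/

import Mathlib

/-!
Layer cake: `π(A_u) = ∑_y π(y) · 1[u ≤ Q(A,y)/π(y)]`, so integrating over an interval of `u`
reduces to locating each threshold `Q(A,y)/π(y)`. Laziness gives `Q(A,y) ≥ π(y)P(y,y) ≥ π(y)/2`
for `y ∈ A`, and, since `Q(A,y) + Q(Aᶜ,y) = π(y)` by stationarity, `Q(A,y) ≤ π(y)/2` for `y ∉ A`.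
Hence `A ⊆ A_u` for `u ≤ 1/2` and `A_u ⊆ A` for `u > 1/2`. The first integral is then
`∑_{y ∉ A} Q(A,y) = Q(A,Aᶜ)`, the second `∑_{y ∈ A} (π(y) - Q(A,y)) = π(A) - Q(A,A) = Q(A,Aᶜ)`.
-/

open Finset

variable {V : Type*}

/-- Ergodic flow from a set `A` into a state `y`: `Q(A,y) = ∑_{x∈A} π(x) P(x,y)`. -/
def ergFlow [Fintype V] (π : V → ℝ) (P : Matrix V V ℝ) (A : Finset V) (y : V) : ℝ :=
  ∑ x ∈ A, π x * P x y

/-- The evolving set `A_u = {y : Q(A,y) ≥ u π(y)}`. -/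
noncomputable def evolSet [Fintype V] (π : V → ℝ) (P : Matrix V V ℝ) (A : Finset V) (u : ℝ) :
    Finset V :=
  Finset.univ.filter (fun y => u * π y ≤ ergFlow π P A y)

/-- Stationary mass of a set: `π(A)`. -/
def mass (π : V → ℝ) (A : Finset V) : ℝ := ∑ y ∈ A, π y

/-- Ergodic flow between sets: `Q(A,B)`. -/
def ergFlowSet (π : V → ℝ) (P : Matrix V V ℝ) (A B : Finset V) : ℝ :=
  ∑ x ∈ A, ∑ y ∈ B, π x * P x y

section StepIntegral

variable {p q a b : ℝ}

lemma antitone_ite_mul_le (hp : 0 ≤ p) : Antitone fun u : ℝ => if u * p ≤ q then p else 0 := by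
  intro u v huv
  dsimp only
  split_ifs with hv hu <;> first | rfl | exact hp | exact absurd (by nlinarith) hu

lemma intervalIntegral_ite_mul_le (hp : 0 ≤ p) (ha : a * p ≤ q) (hb : q ≤ b * p) :
    ∫ u in a..b, (if u * p ≤ q then p else 0) = q - a * p := by
  rcases hp.eq_or_lt with rfl | hp
  · simp only [mul_zero] at ha hb
    simp [le_antisymm hb ha]
  set c := q / p
  have hac : a ≤ c := (le_div_iff₀ hp).mpr ha
  have hcb : c ≤ b := (div_le_iff₀ hp).mpr hb
  have hint : ∀ s t, IntervalIntegrable (fun u : ℝ => if u * p ≤ q then p else 0)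
      MeasureTheory.volume s t := fun _ _ => (antitone_ite_mul_le hp.le).intervalIntegrable
  have below : ∫ u in a..c, (if u * p ≤ q then p else 0) = (c - a) * p := by
    rw [intervalIntegral.integral_congr (g := fun _ => p), intervalIntegral.integral_const,
      smul_eq_mul]
    intro u hu
    rw [Set.uIcc_of_le hac] at hu
    exact if_pos ((le_div_iff₀ hp).mp hu.2)
  have above : ∫ u in c..b, (if u * p ≤ q then p else 0) = 0 := by
    rw [intervalIntegral.integral_congr_ae (g := fun _ => 0), intervalIntegral.integral_zero]
    refine Filter.Eventually.of_forall fun u hu => ?_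
    rw [Set.uIoc_of_le hcb] at hu
    exact if_neg (not_le.mpr ((div_lt_iff₀ hp).mp hu.1))
  rw [← intervalIntegral.integral_add_adjacent_intervals (hint a c) (hint c b), below, above,
    add_zero, sub_mul, div_mul_cancel₀ q hp.ne']

end StepIntegral

section Mass

variable [DecidableEq V] (π : V → ℝ) {A B : Finset V}

lemma mass_sub_mass_eq_sum_compl [Fintype V] (h : A ⊆ B) :
    mass π B - mass π A = ∑ y ∈ Aᶜ, if y ∈ B then π y else 0 := by
  rw [mass, mass, ← sum_sdiff h, add_sub_cancel_right, sum_ite_mem, sdiff_eq_inter_compl,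
    inter_comm]

lemma mass_sub_mass_eq_sum (h : B ⊆ A) :
    mass π A - mass π B = ∑ y ∈ A, (π y - if y ∈ B then π y else 0) := by
  rw [sum_sub_distrib, sum_ite_mem, inter_eq_right.mpr h, mass, mass]

end Mass

section ErgodicFlow

variable [Fintype V] {π : V → ℝ} {P : Matrix V V ℝ} {A : Finset V} {y : V}

lemma mem_evolSet {u : ℝ} : y ∈ evolSet π P A u ↔ u * π y ≤ ergFlow π P A y := by
  simp [evolSet]

lemma ergFlowSet_eq_sum_ergFlow (B : Finset V) :
    ergFlowSet π P A B = ∑ y ∈ B, ergFlow π P A y :=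
  Finset.sum_comm

lemma ergFlowSet_add_ergFlowSet_compl [DecidableEq V] (hProw : ∀ x, ∑ y, P x y = 1)
    (B : Finset V) : ergFlowSet π P A B + ergFlowSet π P A Bᶜ = mass π A := by
  rw [ergFlowSet, ergFlowSet, mass, ← sum_add_distrib]
  refine sum_congr rfl fun x _ => ?_
  rw [sum_add_sum_compl, ← mul_sum, hProw x, mul_one]

lemma ergFlow_add_ergFlow_compl [DecidableEq V] (hstat : ∀ y, ∑ x, π x * P x y = π y) :
    ergFlow π P A y + ergFlow π P Aᶜ y = π y := by
  rw [ergFlow, ergFlow, sum_add_sum_compl, hstat]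

lemma ergFlow_nonneg (hπ : ∀ x, 0 ≤ π x) (hPnn : ∀ x y, 0 ≤ P x y) : 0 ≤ ergFlow π P A y :=
  sum_nonneg fun x _ => mul_nonneg (hπ x) (hPnn x y)

lemma div_two_le_ergFlow_of_mem (hπ : ∀ x, 0 ≤ π x) (hPnn : ∀ x y, 0 ≤ P x y)
    (hlazy : (1:ℝ)/2 ≤ P y y) (hy : y ∈ A) :
    π y / 2 ≤ ergFlow π P A y :=
  calc π y / 2 ≤ π y * P y y := by nlinarith [hπ y]
    _ ≤ ergFlow π P A y :=
      single_le_sum (f := fun x => π x * P x y) (fun x _ => mul_nonneg (hπ x) (hPnn x y)) hy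

lemma subset_evolSet (hπ : ∀ x, 0 ≤ π x) (hPnn : ∀ x y, 0 ≤ P x y)
    (hlazy : ∀ x, (1:ℝ)/2 ≤ P x x) {u : ℝ} (hu : u ≤ 1/2) : A ⊆ evolSet π P A u := fun y hy =>
  mem_evolSet.mpr <| by nlinarith [hπ y, div_two_le_ergFlow_of_mem hπ hPnn (hlazy y) hy]

variable [DecidableEq V]

lemma intervalIntegrable_ite_mem_evolSet (hπy : 0 ≤ π y) (a b : ℝ) :
    IntervalIntegrable (fun u => if y ∈ evolSet π P A u then π y else 0)
      MeasureTheory.volume a b := by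
  simp only [mem_evolSet]
  exact (antitone_ite_mul_le hπy).intervalIntegrable

lemma intervalIntegral_ite_mem_evolSet (hπy : 0 ≤ π y) {a b : ℝ}
    (ha : a * π y ≤ ergFlow π P A y) (hb : ergFlow π P A y ≤ b * π y) :
    ∫ u in a..b, (if y ∈ evolSet π P A u then π y else 0) = ergFlow π P A y - a * π y := by
  simp only [mem_evolSet]
  exact intervalIntegral_ite_mul_le hπy ha hb

lemma ergFlow_le (hπ : ∀ x, 0 ≤ π x) (hPnn : ∀ x y, 0 ≤ P x y)
    (hstat : ∀ y, ∑ x, π x * P x y = π y) : ergFlow π P A y ≤ π y := by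
  linarith [ergFlow_add_ergFlow_compl (A := A) (y := y) hstat,
    ergFlow_nonneg (A := Aᶜ) (y := y) hπ hPnn]

lemma ergFlow_le_div_two_of_notMem (hπ : ∀ x, 0 ≤ π x) (hPnn : ∀ x y, 0 ≤ P x y)
    (hstat : ∀ y, ∑ x, π x * P x y = π y) (hlazy : (1:ℝ)/2 ≤ P y y) (hy : y ∉ A) :
    ergFlow π P A y ≤ π y / 2 := by
  linarith [ergFlow_add_ergFlow_compl (A := A) (y := y) hstat,
    div_two_le_ergFlow_of_mem hπ hPnn hlazy (mem_compl.mpr hy)]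

lemma evolSet_subset (hπ : ∀ x, 0 < π x) (hPnn : ∀ x y, 0 ≤ P x y)
    (hstat : ∀ y, ∑ x, π x * P x y = π y) (hlazy : ∀ x, (1:ℝ)/2 ≤ P x x) {u : ℝ}
    (hu : 1/2 < u) : evolSet π P A u ⊆ A := by
  intro y hy
  by_contra hyA
  have := ergFlow_le_div_two_of_notMem (fun x => (hπ x).le) hPnn hstat (hlazy y) hyA
  nlinarith [hπ y, mem_evolSet.mp hy]

lemma ergFlowSet_compl_eq_integral_sum_compl (hπ : ∀ x, 0 ≤ π x) (hPnn : ∀ x y, 0 ≤ P x y)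
    (hstat : ∀ y, ∑ x, π x * P x y = π y) (hlazy : ∀ x, (1:ℝ)/2 ≤ P x x) :
    ergFlowSet π P A Aᶜ =
      ∫ u in (0:ℝ)..(1/2), ∑ y ∈ Aᶜ, if y ∈ evolSet π P A u then π y else 0 := by
  rw [intervalIntegral.integral_finsetSum fun y _ =>
    intervalIntegrable_ite_mem_evolSet (hπ y) _ _, ergFlowSet_eq_sum_ergFlow]
  refine sum_congr rfl fun y hy => ?_
  have hup := ergFlow_le_div_two_of_notMem hπ hPnn hstat (hlazy y) (mem_compl.mp hy)
  rw [intervalIntegral_ite_mem_evolSet (hπ y) (by simpa using ergFlow_nonneg hπ hPnn)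
    (by linarith), zero_mul, sub_zero]

lemma ergFlowSet_compl_eq_integral_sum (hπ : ∀ x, 0 ≤ π x) (hPnn : ∀ x y, 0 ≤ P x y)
    (hProw : ∀ x, ∑ y, P x y = 1) (hstat : ∀ y, ∑ x, π x * P x y = π y)
    (hlazy : ∀ x, (1:ℝ)/2 ≤ P x x) :
    ergFlowSet π P A Aᶜ =
      ∫ u in (1/2:ℝ)..1, ∑ y ∈ A, (π y - if y ∈ evolSet π P A u then π y else 0) := by
  have hsplit := ergFlowSet_add_ergFlowSet_compl (π := π) (A := A) hProw A
  rw [intervalIntegral.integral_finsetSum fun y _ =>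
    intervalIntegrable_const.sub (intervalIntegrable_ite_mem_evolSet (hπ y) _ _),
    eq_sub_of_add_eq' hsplit, ergFlowSet_eq_sum_ergFlow, mass, ← sum_sub_distrib]
  refine sum_congr rfl fun y hy => ?_
  have hlow := div_two_le_ergFlow_of_mem hπ hPnn (hlazy y) hy
  have hle := ergFlow_le (A := A) (y := y) hπ hPnn hstat
  rw [intervalIntegral.integral_sub intervalIntegrable_const
      (intervalIntegrable_ite_mem_evolSet (hπ y) _ _),
    intervalIntegral.integral_const, smul_eq_mul,
    intervalIntegral_ite_mem_evolSet (hπ y) (by linarith) (by linarith)]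
  ring

end ErgodicFlow

theorem ergFlow_eq_integral_general [Fintype V] [DecidableEq V]
    (π : V → ℝ) (P : Matrix V V ℝ)
    (hPnn : ∀ x y, 0 ≤ P x y) (hProw : ∀ x, ∑ y, P x y = 1)
    (hπpos : ∀ x, 0 < π x)
    (hstat : ∀ y, ∑ x, π x * P x y = π y)
    (hlazy : ∀ x, (1:ℝ)/2 ≤ P x x)
    (A : Finset V) :
    ergFlowSet π P A Aᶜ = ∫ u in (0:ℝ)..(1/2), (mass π (evolSet π P A u) - mass π A) ∧
    ergFlowSet π P A Aᶜ = ∫ u in (1/2:ℝ)..1, (mass π A - mass π (evolSet π P A u)) := by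
  have hπ : ∀ x, 0 ≤ π x := fun x => (hπpos x).le
  constructor
  · rw [ergFlowSet_compl_eq_integral_sum_compl hπ hPnn hstat hlazy]
    refine intervalIntegral.integral_congr fun u hu => ?_
    rw [Set.uIcc_of_le (by norm_num)] at hu
    exact (mass_sub_mass_eq_sum_compl π (subset_evolSet hπ hPnn hlazy hu.2)).symm
  · rw [ergFlowSet_compl_eq_integral_sum hπ hPnn hProw hstat hlazy]
    refine intervalIntegral.integral_congr_ae (Filter.Eventually.of_forall fun u hu => ?_)
    rw [Set.uIoc_of_le (by norm_num)] at hu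
    exact (mass_sub_mass_eq_sum π (evolSet_subset hπpos hPnn hstat hlazy hu.1)).symm

/-- For a lazy chain, ergodic flow equals the area between `π(A_u)` and `π(A)`. -/
theorem ergFlow_eq_integral [Fintype V] [DecidableEq V]
    (π : V → ℝ) (P : Matrix V V ℝ)
    (hPnn : ∀ x y, 0 ≤ P x y) (hProw : ∀ x, ∑ y, P x y = 1)
    (hπpos : ∀ x, 0 < π x) (hπsum : ∑ x, π x = 1)
    (hstat : ∀ y, ∑ x, π x * P x y = π y)
    (hirr : ∀ x y : V, ∃ n : ℕ, 0 < (P ^ n) x y)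
    (hlazy : ∀ x, (1:ℝ)/2 ≤ P x x)
    (A : Finset V) :
    ergFlowSet π P A Aᶜ = ∫ u in (0:ℝ)..(1/2), (mass π (evolSet π P A u) - mass π A) ∧
    ergFlowSet π P A Aᶜ = ∫ u in (1/2:ℝ)..1, (mass π A - mass π (evolSet π P A u)) :=
  ergFlow_eq_integral_general π P hPnn hProw hπpos hstat hlazy A
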